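/- Let P = (H, V, τ, A) be a span program on [q]^n, let α > 0, let x ∈ [q]^n have a negative witness with witness size w(P, x), and let Θ ∈ [0, π]. Then ‖P_Θ(U(P, x, α)) |0̂⟩‖ ≤ (Θ/2)·√(1 + α²·w(P, x)). -/

import Mathlib

noncomputable section

/-- A span program `P = (H, V, τ, A)` on `[q]^m`:
finite-dimensional complex inner product spaces `H` and `V`, an orthogonal
decomposition `H = H_1 ⊕ ⋯ ⊕ H_m ⊕ H_true ⊕ H_false`, subspaces
`H_{j,a} ⊆ H_j` with `Σ_a H_{j,a} = H_j`, a target `τ ∈ V` and `A : H → V`. -/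
structure SpanProgram (q m : ℕ) where
  H : Type
  V : Type
  [nH : NormedAddCommGroup H]
  [iH : InnerProductSpace ℂ H]
  [fH : FiniteDimensional ℂ H]
  [nV : NormedAddCommGroup V]
  [iV : InnerProductSpace ℂ V]
  [fV : FiniteDimensional ℂ V]
  Hj : Fin m → Submodule ℂ H
  Htrue : Submodule ℂ H
  Hfalse : Submodule ℂ H
  ortho : ∀ i i' : Fin m ⊕ Bool, i ≠ i' →
    (Sum.elim Hj (fun b => if b then Htrue else Hfalse) i).IsOrtho
      (Sum.elim Hj (fun b => if b then Htrue else Hfalse) i')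
  spans : (⨆ j, Hj j) ⊔ Htrue ⊔ Hfalse = ⊤
  Hja : Fin m → Fin q → Submodule ℂ H
  Hja_le : ∀ j a, Hja j a ≤ Hj j
  Hja_sup : ∀ j, (⨆ a, Hja j a) = Hj j
  tau : V
  A : H →ₗ[ℂ] V

attribute [instance] SpanProgram.nH SpanProgram.iH SpanProgram.fH
attribute [instance] SpanProgram.nV SpanProgram.iV SpanProgram.fV

namespace SpanProgram

variable {q m : ℕ} (P : SpanProgram q m)

/-- `H(x) = H_{1,x_1} ⊕ ⋯ ⊕ H_{m,x_m} ⊕ H_true`. -/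
def Hx (x : Fin m → Fin q) : Submodule ℂ P.H :=
  (⨆ j, P.Hja j (x j)) ⊔ P.Htrue

/-- `w` is a positive witness for `x`: `w ∈ H(x)` and `A w = τ`. -/
def PosWitness (x : Fin m → Fin q) (w : P.H) : Prop :=
  w ∈ P.Hx x ∧ P.A w = P.tau

/-- `ω` is a negative witness for `x`: `ω(τ) = 1` and `ω ∘ A ∘ Π_{H(x)} = 0`. -/
def NegWitness (x : Fin m → Fin q) (ω : P.V →ₗ[ℂ] ℂ) : Prop :=
  ω P.tau = 1 ∧ ∀ h ∈ P.Hx x, ω (P.A h) = 0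

def HasPos (x : Fin m → Fin q) : Prop := ∃ w, P.PosWitness x w

def HasNeg (x : Fin m → Fin q) : Prop := ∃ ω, P.NegWitness x ω

/-- positive witness size: `min{‖w‖² : w a positive witness for x}`. -/
def posSize (x : Fin m → Fin q) : ℝ :=
  sInf {r : ℝ | ∃ w, P.PosWitness x w ∧ r = ‖w‖ ^ 2}

/-- negative witness size: `min{‖ω∘A‖² : ω a negative witness for x}`, where
`‖ω∘A‖` is the norm of (the Riesz representative of) the functional `ω∘A`. -/
def negSize (x : Fin m → Fin q) : ℝ :=
  sInf {r : ℝ | ∃ ω, P.NegWitness x ω ∧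
    r = ‖LinearMap.toContinuousLinearMap (ω ∘ₗ P.A)‖ ^ 2}

open Classical in
/-- the witness size `w(P,x)`. -/
def witSize (x : Fin m → Fin q) : ℝ :=
  if P.HasPos x then P.posSize x else P.negSize x

/-- `P` decides `f` on `X`: every `x ∈ X` with `f x = 1` has a positive witness and
every `x ∈ X` with `f x = 0` has a negative witness. -/
def Decides (X : Set (Fin m → Fin q)) (f : (Fin m → Fin q) → Bool) : Prop :=
  ∀ x ∈ X, (f x = true → P.HasPos x) ∧ (f x = false → P.HasNeg x)

end SpanProgram


namespace SpanProgram

variable {q m : ℕ} (P : SpanProgram q m)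

/-- `H̃ = H ⊕ ℂ|0̂⟩` (with the `L²` direct-sum inner product). -/
def Htilde : Type := WithLp 2 (P.H × ℂ)

instance : NormedAddCommGroup P.Htilde :=
  inferInstanceAs (NormedAddCommGroup (WithLp 2 (P.H × ℂ)))
instance : InnerProductSpace ℂ P.Htilde :=
  inferInstanceAs (InnerProductSpace ℂ (WithLp 2 (P.H × ℂ)))
instance : FiniteDimensional ℂ P.Htilde :=
  inferInstanceAs (FiniteDimensional ℂ (WithLp 2 (P.H × ℂ)))

/-- the canonical linear identification of `H̃` with `H × ℂ`. -/
def tildeEquiv : P.Htilde ≃ₗ[ℂ] P.H × ℂ := WithLp.linearEquiv 2 ℂ (P.H × ℂ)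

/-- the unit vector `|0̂⟩ ∈ H̃`, orthogonal to `H`. -/
def zeroHat : P.Htilde := P.tildeEquiv.symm (0, 1)

/-- the isometric embedding of `H` into `H̃`. -/
def embed : P.H →ₗ[ℂ] P.Htilde :=
  P.tildeEquiv.symm.toLinearMap ∘ₗ LinearMap.inl ℂ P.H ℂ

/-- `A_α : H̃ → V`, with `A_α|0̂⟩ = τ/α` and `A_α = A` on `H`. -/
def Aalpha (α : ℝ) : P.Htilde →ₗ[ℂ] P.V :=
  (P.A.coprod (LinearMap.toSpanSingleton ℂ P.V (((α : ℂ))⁻¹ • P.tau))) ∘ₗ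
    P.tildeEquiv.toLinearMap

/-- `H̃(x) = H(x) ⊕ ℂ|0̂⟩`. -/
def HxTilde (x : Fin m → Fin q) : Submodule ℂ P.Htilde :=
  ((P.Hx x).prod (⊤ : Submodule ℂ ℂ)).comap P.tildeEquiv.toLinearMap

/-- orthogonal projection onto a submodule, as an endomorphism. -/
def projL (S : Submodule ℂ P.Htilde) : P.Htilde →ₗ[ℂ] P.Htilde :=
  S.subtype ∘ₗ (Submodule.orthogonalProjection S).toLinearMap

/-- `Λ_α`: the orthogonal projection of `H̃` onto `ker A_α`. -/
def Lambda (α : ℝ) : P.Htilde →ₗ[ℂ] P.Htilde :=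
  P.projL (LinearMap.ker (P.Aalpha α))

/-- `Π_x`: the orthogonal projection of `H̃` onto `H̃(x)`. -/
def Pix (x : Fin m → Fin q) : P.Htilde →ₗ[ℂ] P.Htilde :=
  P.projL (P.HxTilde x)

/-- `U(P, x, α) = (2Π_x − I)(2Λ_α − I)`. -/
def U (x : Fin m → Fin q) (α : ℝ) : P.Htilde →ₗ[ℂ] P.Htilde :=
  (2 • P.Pix x - LinearMap.id) ∘ₗ (2 • P.Lambda α - LinearMap.id)

end SpanProgram

/-- `phaseSpace U Θ` is the span of the eigenvectors of `U` with eigenvalue `e^{iθ}`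
for `|θ| ≤ Θ`; the orthogonal projection onto it is `P_Θ(U)`. -/
def phaseSpace {K : Type*} [NormedAddCommGroup K] [InnerProductSpace ℂ K]
    (U : K →ₗ[ℂ] K) (Θ : ℝ) : Submodule ℂ K :=
  ⨆ θ : Set.Icc (-Θ) Θ, Module.End.eigenspace U (Complex.exp (Complex.I * (θ : ℝ)))

/-!
A negative witness `ω` gives the vector `u = α (ωA)† + |0̂⟩`, which is orthogonal to `ker A_α`
and is projected by `Π_x` onto `|0̂⟩`; hence `(I - U) u = 2 |0̂⟩`, while
`‖u‖² = 1 + α² ‖ωA‖²`. Since `U` is a product of two reflections it is unitary, its eigenspaces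
are mutually orthogonal, and on an eigenvector with eigenvalue `e^{iθ}`, `|θ| ≤ Θ`, the operator
`I - U*` has norm `|1 - e^{-iθ}| ≤ Θ`. Pairing against `P_Θ(U) (I - U) u` gives the effective
spectral gap bound `‖P_Θ(U) (I - U) u‖ ≤ Θ ‖u‖`; it remains to minimise over `ω`.
-/

theorem Monotone.le_map_csInf {α β : Type*} [ConditionallyCompleteLinearOrder α]
    [TopologicalSpace α] [OrderTopology α] [ConditionallyCompleteLinearOrder β]
    [TopologicalSpace β] [OrderClosedTopology β] {f : α → β} {s : Set α} {c : β}
    (hf : Monotone f) (hfc : ContinuousAt f (sInf s)) (hs : s.Nonempty) (hbdd : BddBelow s)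
    (h : ∀ a ∈ s, c ≤ f a) : c ≤ f (sInf s) := by
  rw [hf.map_csInf_of_continuousAt hfc hs hbdd]
  exact le_csInf (hs.image f) (Set.forall_mem_image.mpr h)

open Module.End Complex ComplexConjugate
open scoped InnerProductSpace

theorem OrthogonalFamily.norm_sum_smul_le {𝕜 E ι : Type*} [RCLike 𝕜] [NormedAddCommGroup E]
    [InnerProductSpace 𝕜 E] {G : ι → Type*} [∀ i, NormedAddCommGroup (G i)]
    [∀ i, InnerProductSpace 𝕜 (G i)] {V : ∀ i, G i →ₗᵢ[𝕜] E} (hV : OrthogonalFamily 𝕜 G V)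
    (l : ∀ i, G i) (c : ι → 𝕜) (s : Finset ι) {C : ℝ} (hC : 0 ≤ C)
    (hc : ∀ i ∈ s, ‖c i‖ ≤ C) :
    ‖∑ i ∈ s, c i • V i (l i)‖ ≤ C * ‖∑ i ∈ s, V i (l i)‖ := by
  simp_rw [← LinearIsometry.map_smul]
  refine le_of_pow_le_pow_left₀ two_ne_zero (by positivity) ?_
  rw [mul_pow, hV.norm_sum, hV.norm_sum, Finset.mul_sum]
  gcongr with i hi
  rw [norm_smul, mul_pow]
  gcongr
  exact hc i hi

section IsometrySpectrum

variable {K : Type*} [NormedAddCommGroup K] [InnerProductSpace ℂ K]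

theorem LinearIsometry.norm_eq_one_of_mem_eigenspace (U : K →ₗᵢ[ℂ] K) {μ : ℂ} {v : K}
    (hv : v ∈ eigenspace (U : K →ₗ[ℂ] K) μ) (hv0 : v ≠ 0) : ‖μ‖ = 1 := by
  have h : ‖μ‖ * ‖v‖ = 1 * ‖v‖ := by
    rw [← norm_smul, ← mem_eigenspace_iff.mp hv, one_mul]
    exact U.norm_map v
  exact mul_right_cancel₀ (norm_ne_zero_iff.mpr hv0) h

theorem LinearIsometry.orthogonalFamily_eigenspace (U : K →ₗᵢ[ℂ] K) :
    OrthogonalFamily ℂ (fun μ => eigenspace (U : K →ₗ[ℂ] K) μ)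
      fun μ => (eigenspace (U : K →ₗ[ℂ] K) μ).subtypeₗᵢ := by
  rintro μ ν hμν ⟨v, hv⟩ ⟨w, hw⟩
  by_contra hvw
  have hv0 : v ≠ 0 := by rintro rfl; simp at hvw
  have hμ := U.norm_eq_one_of_mem_eigenspace hv hv0
  have h : conj μ * ν * ⟪v, w⟫_ℂ = 1 * ⟪v, w⟫_ℂ := by
    have hUv : U v = μ • v := mem_eigenspace_iff.mp hv
    have hUw : U w = ν • w := mem_eigenspace_iff.mp hw
    have h := U.inner_map_map v w
    rw [hUv, hUw, inner_smul_left, inner_smul_right] at h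
    linear_combination h
  have hconj : conj μ * ν = conj μ * μ := by
    rw [mul_right_cancel₀ hvw h, conj_mul', hμ]
    norm_num
  have hμ0 : conj μ ≠ 0 := by simp [← norm_ne_zero_iff, hμ]
  exact hμν (mul_left_cancel₀ hμ0 hconj).symm

theorem LinearIsometryEquiv.symm_apply_of_mem_eigenspace (U : K ≃ₗᵢ[ℂ] K) {μ : ℂ} {v : K}
    (hv : v ∈ eigenspace (U : K →ₗ[ℂ] K) μ) : U.symm v = conj μ • v := by
  rcases eq_or_ne v 0 with rfl | hv0
  · simp
  have hμ := U.toLinearIsometry.norm_eq_one_of_mem_eigenspace hv hv0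
  have hUv : U v = μ • v := mem_eigenspace_iff.mp hv
  rw [LinearIsometryEquiv.symm_apply_eq, map_smul, hUv, smul_smul, conj_mul', hμ]
  simp

theorem LinearIsometryEquiv.norm_sub_symm_apply_le_of_mem_phaseSpace (U : K ≃ₗᵢ[ℂ] K) {Θ : ℝ}
    (hΘ : 0 ≤ Θ) {p : K} (hp : p ∈ phaseSpace (U : K →ₗ[ℂ] K) Θ) :
    ‖p - U.symm p‖ ≤ Θ * ‖p‖ := by
  -- Reindex by the eigenvalues themselves: `θ = -π` and `θ = π` give the same eigenspace.
  let phase : Set.Icc (-Θ) Θ → ℂ := fun θ => exp (I * (θ : ℝ))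
  have hp' : p ∈ ⨆ μ : Set.range phase, eigenspace (U : K →ₗ[ℂ] K) μ := by
    rwa [iSup_range' (fun μ => eigenspace (U : K →ₗ[ℂ] K) μ) phase]
  obtain ⟨f, hf, rfl⟩ := (Submodule.mem_iSup_iff_exists_finsupp _ _).mp hp'
  have hV := U.toLinearIsometry.orthogonalFamily_eigenspace.comp
    (Subtype.val_injective : Function.Injective ((↑) : Set.range phase → ℂ))
  have key := hV.norm_sum_smul_le (fun μ => ⟨f μ, hf μ⟩) (fun μ => 1 - conj (μ : ℂ))
    f.support hΘ ?_
  · convert key using 2 <;>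
      simp [Finsupp.sum, sub_smul, map_sum, U.symm_apply_of_mem_eigenspace (hf _)]
  · rintro ⟨μ, θ, hθ⟩ -
    calc ‖1 - conj μ‖ = ‖phase θ - 1‖ := by
          rw [← hθ, ← norm_conj (phase θ - 1), RingHom.map_sub, map_one, norm_sub_rev]
      _ ≤ |(θ : ℝ)| := Real.norm_exp_I_mul_ofReal_sub_one_le
      _ ≤ Θ := abs_le.mpr θ.2

theorem LinearIsometryEquiv.norm_starProjection_phaseSpace_sub_le [FiniteDimensional ℂ K]
    (U : K ≃ₗᵢ[ℂ] K) {Θ : ℝ} (hΘ : 0 ≤ Θ) (u : K) :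
    ‖(phaseSpace (U : K →ₗ[ℂ] K) Θ).starProjection (u - U u)‖ ≤ Θ * ‖u‖ := by
  set S := phaseSpace (U : K →ₗ[ℂ] K) Θ
  set p := S.starProjection (u - U u)
  have hsq : ‖p‖ * ‖p‖ ≤ ‖p‖ * (Θ * ‖u‖) := calc
    ‖p‖ * ‖p‖ = RCLike.re ⟪p, u - U u⟫_ℂ := by
      rw [← sq, S.re_inner_starProjection_eq_normSq]
      rfl
    _ = RCLike.re ⟪p - U.symm p, u⟫_ℂ := by
      rw [inner_sub_left, inner_sub_right, U.symm.inner_map_eq_flip, U.symm_symm]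
    _ ≤ ‖p - U.symm p‖ * ‖u‖ := (RCLike.re_le_norm _).trans (norm_inner_le_norm _ _)
    _ ≤ Θ * ‖p‖ * ‖u‖ := by
      gcongr
      exact U.norm_sub_symm_apply_le_of_mem_phaseSpace hΘ (S.starProjection_apply_mem _)
    _ = ‖p‖ * (Θ * ‖u‖) := by ring
  rcases (norm_nonneg p).eq_or_lt with hp | hp
  · rw [← hp]; positivity
  · exact le_of_mul_le_mul_left hsq hp

end IsometrySpectrum

namespace SpanProgram

variable {q m : ℕ} (P : SpanProgram q m) {x : Fin m → Fin q} {α : ℝ} {ω : P.V →ₗ[ℂ] ℂ}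

theorem inner_Htilde (a b : P.Htilde) :
    ⟪a, b⟫_ℂ = ⟪(P.tildeEquiv a).1, (P.tildeEquiv b).1⟫_ℂ +
      conj (P.tildeEquiv a).2 * (P.tildeEquiv b).2 := by
  rw [← RCLike.inner_apply']
  rfl

theorem norm_sq_Htilde (a : P.Htilde) :
    ‖a‖ ^ 2 = ‖(P.tildeEquiv a).1‖ ^ 2 + ‖(P.tildeEquiv a).2‖ ^ 2 :=
  WithLp.prod_norm_sq_eq_of_L2 a

theorem tildeEquiv_zeroHat : P.tildeEquiv P.zeroHat = (0, 1) :=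
  P.tildeEquiv.apply_symm_apply _

def unitaryU (x : Fin m → Fin q) (α : ℝ) : P.Htilde ≃ₗᵢ[ℂ] P.Htilde :=
  (LinearMap.ker (P.Aalpha α)).reflection.trans (P.HxTilde x).reflection

theorem coe_unitaryU (x : Fin m → Fin q) (α : ℝ) :
    (P.unitaryU x α : P.Htilde →ₗ[ℂ] P.Htilde) = P.U x α := by
  ext v
  change (P.HxTilde x).reflection ((LinearMap.ker (P.Aalpha α)).reflection v) = _
  rw [Submodule.reflection_apply, Submodule.reflection_apply]
  rfl

/-- The vector `α (ωA)† + |0̂⟩` of the paper, where `(ωA)†` is the Riesz representative of `ωA`. -/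
def negWitnessVector (α : ℝ) (ω : P.V →ₗ[ℂ] ℂ) : P.Htilde :=
  P.tildeEquiv.symm
    ((α : ℂ) • (InnerProductSpace.toDual ℂ P.H).symm (ω ∘ₗ P.A).toContinuousLinearMap, 1)

theorem tildeEquiv_negWitnessVector : P.tildeEquiv (P.negWitnessVector α ω) =
    ((α : ℂ) • (InnerProductSpace.toDual ℂ P.H).symm (ω ∘ₗ P.A).toContinuousLinearMap, 1) :=
  P.tildeEquiv.apply_symm_apply _

theorem inner_negWitnessVector (a : P.Htilde) :
    ⟪P.negWitnessVector α ω, a⟫_ℂ = α * ω (P.A (P.tildeEquiv a).1) + (P.tildeEquiv a).2 := by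
  rw [inner_Htilde, tildeEquiv_negWitnessVector, inner_smul_left, conj_ofReal,
    InnerProductSpace.toDual_symm_apply, map_one, one_mul]
  rfl

theorem norm_negWitnessVector_sq (hα : 0 ≤ α) : ‖P.negWitnessVector α ω‖ ^ 2 =
    1 + α ^ 2 * ‖(ω ∘ₗ P.A).toContinuousLinearMap‖ ^ 2 := by
  rw [norm_sq_Htilde, tildeEquiv_negWitnessVector, norm_smul, LinearIsometryEquiv.norm_map,
    norm_real, Real.norm_of_nonneg hα, norm_one]
  ring

theorem negWitnessVector_mem_orthogonal_ker (hα : α ≠ 0) (hτ : ω P.tau = 1) :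
    P.negWitnessVector α ω ∈ (LinearMap.ker (P.Aalpha α))ᗮ := by
  refine (Submodule.mem_orthogonal' _ _).mpr fun a ha => ?_
  have hωa := congrArg ω (LinearMap.mem_ker.mp ha)
  simp only [Aalpha, LinearMap.coe_comp, Function.comp_apply, LinearMap.coprod_apply,
    LinearMap.toSpanSingleton_apply, map_add, map_smul, hτ, map_zero, smul_eq_mul] at hωa
  have hαC : (α : ℂ) ≠ 0 := by exact_mod_cast hα
  rw [inner_negWitnessVector]
  field_simp at hωa
  linear_combination hωa

theorem starProjection_HxTilde_negWitnessVector (hω : ∀ h ∈ P.Hx x, ω (P.A h) = 0) :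
    (P.HxTilde x).starProjection (P.negWitnessVector α ω) = P.zeroHat := by
  refine Submodule.eq_starProjection_of_mem_of_inner_eq_zero (K := P.HxTilde x)
    (u := P.negWitnessVector α ω) ?_ fun a ha => ?_
  · show P.tildeEquiv P.zeroHat ∈ (P.Hx x).prod ⊤
    rw [tildeEquiv_zeroHat]
    exact ⟨zero_mem _, trivial⟩
  · have hzero : ⟪P.zeroHat, a⟫_ℂ = (P.tildeEquiv a).2 := by
      simp [inner_Htilde, tildeEquiv_zeroHat]
    have ha' : (P.tildeEquiv a).1 ∈ P.Hx x := ha.1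
    rw [inner_sub_left, inner_negWitnessVector, hzero, hω _ ha']
    ring

theorem sub_unitaryU_apply_negWitnessVector (hα : α ≠ 0) (hω : P.NegWitness x ω) :
    P.negWitnessVector α ω - P.unitaryU x α (P.negWitnessVector α ω) = (2 : ℂ) • P.zeroHat := by
  change _ - (P.HxTilde x).reflection ((LinearMap.ker (P.Aalpha α)).reflection _) = _
  rw [Submodule.reflection_mem_subspace_orthogonalComplement_eq_neg
      (P.negWitnessVector_mem_orthogonal_ker hα hω.1), map_neg, Submodule.reflection_apply,
    P.starProjection_HxTilde_negWitnessVector hω.2, two_smul, two_smul]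
  abel

theorem norm_projL_phaseSpace_zeroHat_le (hα : 0 < α) {Θ : ℝ} (hΘ : 0 ≤ Θ)
    (hω : P.NegWitness x ω) :
    ‖P.projL (phaseSpace (P.U x α) Θ) P.zeroHat‖ ≤
      Θ / 2 * √(1 + α ^ 2 * ‖(ω ∘ₗ P.A).toContinuousLinearMap‖ ^ 2) := by
  have h := (P.unitaryU x α).norm_starProjection_phaseSpace_sub_le hΘ (P.negWitnessVector α ω)
  rw [coe_unitaryU, P.sub_unitaryU_apply_negWitnessVector hα.ne' hω, map_smul, norm_smul,
    ← Real.sqrt_sq (norm_nonneg (P.negWitnessVector α ω)), P.norm_negWitnessVector_sq hα.le] at h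
  change ‖(phaseSpace (P.U x α) Θ).starProjection P.zeroHat‖ ≤ _
  norm_num at h
  linarith

end SpanProgram

theorem negative_case_phase_bound_general {q n : ℕ}
    (P : SpanProgram q n) (x : Fin n → Fin q) (hx : P.HasNeg x)
    (α : ℝ) (hα : 0 < α) (Θ : ℝ) (hΘ : Θ ∈ Set.Icc (0 : ℝ) Real.pi) :
    ‖P.projL (phaseSpace (P.U x α) Θ) P.zeroHat‖ ≤
      (Θ / 2) * Real.sqrt (1 + α ^ 2 * P.negSize x) := by
  obtain ⟨ω₀, hω₀⟩ := hx
  have hmono : Monotone fun r : ℝ => Θ / 2 * √(1 + α ^ 2 * r) := fun r s hrs => by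
    have := hΘ.1
    dsimp only
    gcongr
  refine hmono.le_map_csInf (by fun_prop) ⟨_, ω₀, hω₀, rfl⟩
    ⟨0, by rintro _ ⟨ω, -, rfl⟩; positivity⟩ ?_
  rintro _ ⟨ω, hω, rfl⟩
  exact P.norm_projL_phaseSpace_zeroHat_le hα hΘ.1 hω

/-- if `x` has a negative witness with witness size `w(P,x)` and
`Θ ∈ [0,π]`, then `‖P_Θ(U(P,x,α))|0̂⟩‖ ≤ (Θ/2)·√(1 + α²·w(P,x))`. -/
theorem negative_case_phase_bound {q n : ℕ} (hq : 2 ≤ q) (hn : 1 ≤ n)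
    (P : SpanProgram q n) (x : Fin n → Fin q) (hx : P.HasNeg x)
    (α : ℝ) (hα : 0 < α) (Θ : ℝ) (hΘ : Θ ∈ Set.Icc (0 : ℝ) Real.pi) :
    ‖P.projL (phaseSpace (P.U x α) Θ) P.zeroHat‖ ≤
      (Θ / 2) * Real.sqrt (1 + α ^ 2 * P.negSize x) :=
  negative_case_phase_bound_general P x hx α hα Θ hΘ
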